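/- Every 3-regular graph on 14 vertices with girth at least 6 is isomorphic to the Heawood graph. -/

import Mathlib

open Finset SimpleGraph

section Aux
variable {V : Type*} {G : SimpleGraph V}

lemma girth_no3 (hg : (6:ℕ∞) ≤ G.egirth) {a b c : V}
    (h1 : G.Adj a b) (h2 : G.Adj b c) (h3 : G.Adj a c) : False := by
  have hc : ((Walk.cons h1 (Walk.cons h2 (Walk.cons h3.symm Walk.nil))) : G.Walk a a).IsCycle := by
    simp [Walk.isCycle_def, Walk.isTrail_def, h1.ne, h2.ne, h3.ne, h1.ne', h2.ne', h3.ne']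
  have := le_egirth.mp hg a _ hc
  simp only [Walk.length_cons, Walk.length_nil] at this
  norm_num at this

lemma girth_no4 (hg : (6:ℕ∞) ≤ G.egirth) {a b c d : V}
    (h1 : G.Adj a b) (h2 : G.Adj b c) (h3 : G.Adj c d) (h4 : G.Adj a d)
    (hac : a ≠ c) (hbd : b ≠ d) : False := by
  have hc : ((Walk.cons h1 (Walk.cons h2 (Walk.cons h3 (Walk.cons h4.symm Walk.nil)))) : G.Walk a a).IsCycle := by
    simp [Walk.isCycle_def, Walk.isTrail_def, h1.ne, h2.ne, h3.ne, h4.ne, h1.ne', h2.ne',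
      h3.ne', h4.ne', hac, hbd, hac.symm, hbd.symm]
  have := le_egirth.mp hg a _ hc
  simp only [Walk.length_cons, Walk.length_nil] at this
  norm_num at this

lemma girth_no5 (hg : (6:ℕ∞) ≤ G.egirth) {a b c d e : V}
    (h1 : G.Adj a b) (h2 : G.Adj b c) (h3 : G.Adj c d) (h4 : G.Adj d e) (h5 : G.Adj a e)
    (hac : a ≠ c) (had : a ≠ d) (hbd : b ≠ d) (hbe : b ≠ e) (hce : c ≠ e) : False := by
  have hc : ((Walk.cons h1 (Walk.cons h2 (Walk.cons h3 (Walk.cons h4 (Walk.cons h5.symm Walk.nil))))) : G.Walk a a).IsCycle := by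
    simp [Walk.isCycle_def, Walk.isTrail_def, h1.ne, h2.ne, h3.ne, h4.ne, h5.ne, h1.ne', h2.ne',
      h3.ne', h4.ne', h5.ne', hac, had, hbd, hbe, hce, hac.symm, had.symm, hbd.symm, hbe.symm, hce.symm]
  have := le_egirth.mp hg a _ hc
  simp only [Walk.length_cons, Walk.length_nil] at this
  norm_num at this

end Aux

/-- A finset of vertices is independent in `G` if no two of its elements are adjacent. -/
def IndepFinset {V : Type*} (G : SimpleGraph V) (s : Finset V) : Prop :=
  ∀ a ∈ s, ∀ b ∈ s, ¬ G.Adj a b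

open Classical in
/-- The independence polynomial of a finite graph. -/
noncomputable def indepPoly {V : Type*} [Fintype V] (G : SimpleGraph V) (x : ℝ) : ℝ :=
  ∑ s : Finset V, if IndepFinset G s then x ^ s.card else 0

/-- The occupancy fraction `α_G(λ) = λ P_G'(λ) / (n P_G(λ))`. -/
noncomputable def occFraction {V : Type*} [Fintype V] (G : SimpleGraph V) (x : ℝ) : ℝ :=
  x * deriv (indepPoly G) x / ((Fintype.card V : ℝ) * indepPoly G x)

/-- The Petersen graph as the Kneser graph K(5,2). -/
def PetersenGraph : SimpleGraph {s : Finset (Fin 5) // s.card = 2} where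
  Adj a b := Disjoint a.1 b.1
  symm := ⟨fun a b h => h.symm⟩
  loopless := by
    constructor
    rintro ⟨s, hs⟩ h
    rw [disjoint_self] at h
    simp only [Subtype.coe_mk] at h
    rw [h] at hs
    simp at hs

/-- Incidence relation of the Fano plane: point `p` lies on line `l`. -/
def FanoIncident (p l : Fin 7) : Prop := p = l ∨ p = l + 1 ∨ p = l + 3

/-- The Heawood graph as the point-line incidence graph of the Fano plane. -/
def HeawoodGraph : SimpleGraph (Fin 7 ⊕ Fin 7) where
  Adj a b := (∃ p l, a = Sum.inl p ∧ b = Sum.inr l ∧ FanoIncident p l) ∨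
             (∃ p l, a = Sum.inr l ∧ b = Sum.inl p ∧ FanoIncident p l)
  symm := by
    constructor
    rintro a b (⟨p, l, rfl, rfl, h⟩ | ⟨p, l, rfl, rfl, h⟩)
    · exact Or.inr ⟨p, l, rfl, rfl, h⟩
    · exact Or.inl ⟨p, l, rfl, rfl, h⟩
  loopless := by
    constructor
    rintro a (⟨p, l, rfl, h, _⟩ | ⟨p, l, rfl, h, _⟩) <;> exact absurd h (by simp)


instance (p l : Fin 7) : Decidable (FanoIncident p l) :=
  inferInstanceAs (Decidable (_ ∨ _))

instance : DecidableRel HeawoodGraph.Adj :=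
  fun _ _ => inferInstanceAs (Decidable (_ ∨ _))

def heawoodModelEdges : List (Fin 14 × Fin 14) :=
  [(0,1),(0,2),(0,3),(1,4),(1,5),(2,6),(2,7),(3,8),(3,9),
   (10,4),(10,6),(10,8),(11,4),(11,7),(11,9),(12,6),(12,5),(12,9),(13,8),(13,5),(13,7)]

def ModelGraph : SimpleGraph (Fin 14) where
  Adj i j := (i,j) ∈ heawoodModelEdges ∨ (j,i) ∈ heawoodModelEdges
  symm := by constructor; intro i j h; exact h.symm
  loopless := by constructor; intro i; revert i; decide

instance : DecidableRel ModelGraph.Adj :=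
  fun _ _ => inferInstanceAs (Decidable (_ ∨ _))

def modelEquiv : Fin 14 ≃ (Fin 7 ⊕ Fin 7) where
  toFun := ![.inl 0, .inr 0, .inr 4, .inr 6, .inl 1, .inl 3, .inl 4, .inl 5, .inl 2, .inl 6,
    .inr 1, .inr 5, .inr 3, .inr 2]
  invFun := fun x => match x with
    | .inl p => ![0, 4, 8, 5, 6, 7, 9] p
    | .inr l => ![1, 10, 13, 12, 2, 11, 3] l
  left_inv := by decide
  right_inv := by decide

theorem model_iso_heawood : Nonempty (ModelGraph ≃g HeawoodGraph) :=
  ⟨⟨modelEquiv, by decide⟩⟩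


/-- Every cubic graph on 14 vertices with girth at least 6 is isomorphic to the Heawood
graph. -/
theorem heawood_unique {V : Type*} [Fintype V]
    (G : SimpleGraph V) [DecidableRel G.Adj]
    (hcard : Fintype.card V = 14)
    (hreg : G.IsRegularOfDegree 3) (hg : (6 : ℕ∞) ≤ G.egirth) :
    Nonempty (G ≃g HeawoodGraph) := by
  classical
  have no3 : ∀ {a b c : V}, G.Adj a b → G.Adj b c → G.Adj a c → False :=
    fun h1 h2 h3 => girth_no3 hg h1 h2 h3
  have no4 : ∀ {a b c d : V}, G.Adj a b → G.Adj b c → G.Adj c d → G.Adj a d → a ≠ c → b ≠ d → False :=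
    fun h1 h2 h3 h4 h5 h6 => girth_no4 hg h1 h2 h3 h4 h5 h6
  have no5 : ∀ {a b c d e : V}, G.Adj a b → G.Adj b c → G.Adj c d → G.Adj d e → G.Adj a e →
      a ≠ c → a ≠ d → b ≠ d → b ≠ e → c ≠ e → False :=
    fun h1 h2 h3 h4 h5 n1 n2 n3 n4 n5 => girth_no5 hg h1 h2 h3 h4 h5 n1 n2 n3 n4 n5
  have hdeg : ∀ v : V, (G.neighborFinset v).card = 3 := fun v => hreg v
  obtain ⟨v0⟩ : Nonempty V := Fintype.card_pos_iff.mp (by omega)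
  obtain ⟨a1, a2, a3, ha12, ha13, ha23, hNv0⟩ := Finset.card_eq_three.mp (hdeg v0)
  have hAiff : ∀ x, G.Adj v0 x ↔ (x = a1 ∨ x = a2 ∨ x = a3) := by
    intro x; rw [← SimpleGraph.mem_neighborFinset, hNv0]; simp
  have hA1 : G.Adj v0 a1 := (hAiff a1).mpr (Or.inl rfl)
  have hA2 : G.Adj v0 a2 := (hAiff a2).mpr (Or.inr (Or.inl rfl))
  have hA3 : G.Adj v0 a3 := (hAiff a3).mpr (Or.inr (Or.inr rfl))
  -- basic girth consequences
  have hba : ∀ {a a' : V}, G.Adj v0 a → G.Adj v0 a' → ¬ G.Adj a a' :=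
    fun h h' hadj => no3 h hadj h'
  have bprop : ∀ {a b : V}, G.Adj v0 a → G.Adj a b → b ≠ v0 → ¬ G.Adj v0 b :=
    fun ha hab _ hvb => no3 ha hab hvb
  have bprop2 : ∀ {a b a' : V}, G.Adj v0 a → G.Adj a b → b ≠ v0 → G.Adj v0 a' → a' ≠ a →
      ¬ G.Adj a' b :=
    fun ha hab hb ha' hne h => no4 ha hab h.symm ha' (fun he => hb he.symm) (fun he => hne he.symm)
  have hchild_ne : ∀ {a b a' b' : V}, G.Adj v0 a → G.Adj a b → b ≠ v0 → G.Adj v0 a' →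
      G.Adj a' b' → a ≠ a' → b ≠ b' := by
    intro a b a' b' ha hab hb ha' hab' hne heq
    exact bprop2 ha hab hb ha' (Ne.symm hne) (heq ▸ hab')
  have hsame : ∀ {a b b' : V}, G.Adj a b → G.Adj a b' → ¬ G.Adj b b' :=
    fun h h' hadj => no3 h hadj h'
  have hcross : ∀ {a b a' b' : V}, G.Adj v0 a → G.Adj a b → b ≠ v0 → G.Adj v0 a' →
      G.Adj a' b' → b' ≠ v0 → a ≠ a' → ¬ G.Adj b b' := by
    intro a b a' b' ha hab hb ha' hab' hb' hne hbb'
    have hab2 : a ≠ b' := by rintro rfl; exact no3 ha' hab' ha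
    have hba' : b ≠ a' := by rintro rfl; exact no3 ha hab ha'
    exact no5 ha hab hbb' hab'.symm ha' (Ne.symm hb) (Ne.symm hb') hab2 hne hba'
  -- branches
  have branch : ∀ a : V, G.Adj v0 a → ∃ P : Finset V, P.card = 2 ∧ v0 ∉ P ∧
      G.neighborFinset a = insert v0 P := by
    intro a ha
    have hv0mem : v0 ∈ G.neighborFinset a := (G.mem_neighborFinset _ _).mpr ha.symm
    refine ⟨(G.neighborFinset a).erase v0, ?_, Finset.notMem_erase _ _, ?_⟩
    · rw [Finset.card_erase_of_mem hv0mem, hdeg]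
    · rw [Finset.insert_erase hv0mem]
  obtain ⟨P1, hP1card, hv0P1, hNa1⟩ := branch a1 hA1
  obtain ⟨P2, hP2card, hv0P2, hNa2⟩ := branch a2 hA2
  obtain ⟨P3, hP3card, hv0P3, hNa3⟩ := branch a3 hA3
  have hPadj1 : ∀ x ∈ P1, G.Adj a1 x := fun x hx =>
    (G.mem_neighborFinset _ _).mp (hNa1 ▸ Finset.mem_insert_of_mem hx)
  have hPadj2 : ∀ x ∈ P2, G.Adj a2 x := fun x hx =>
    (G.mem_neighborFinset _ _).mp (hNa2 ▸ Finset.mem_insert_of_mem hx)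
  have hPadj3 : ∀ x ∈ P3, G.Adj a3 x := fun x hx =>
    (G.mem_neighborFinset _ _).mp (hNa3 ▸ Finset.mem_insert_of_mem hx)
  have hPne1 : ∀ x ∈ P1, x ≠ v0 := fun x hx h => hv0P1 (h ▸ hx)
  have hPne2 : ∀ x ∈ P2, x ≠ v0 := fun x hx h => hv0P2 (h ▸ hx)
  have hPne3 : ∀ x ∈ P3, x ≠ v0 := fun x hx h => hv0P3 (h ▸ hx)
  -- children are not a's
  have hPnota : ∀ x : V, (x ∈ P1 ∨ x ∈ P2 ∨ x ∈ P3) → x ≠ a1 ∧ x ≠ a2 ∧ x ≠ a3 := by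
    intro x hx
    have key : ∀ a : V, G.Adj v0 a → G.Adj a x → ∀ a' : V, G.Adj v0 a' → x ≠ a' := by
      intro a ha hax a' ha' he
      subst he
      exact hba ha ha' hax
    rcases hx with hx | hx | hx
    · exact ⟨key a1 hA1 (hPadj1 x hx) a1 hA1, key a1 hA1 (hPadj1 x hx) a2 hA2,
        key a1 hA1 (hPadj1 x hx) a3 hA3⟩
    · exact ⟨key a2 hA2 (hPadj2 x hx) a1 hA1, key a2 hA2 (hPadj2 x hx) a2 hA2,
        key a2 hA2 (hPadj2 x hx) a3 hA3⟩
    · exact ⟨key a3 hA3 (hPadj3 x hx) a1 hA1, key a3 hA3 (hPadj3 x hx) a2 hA2,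
        key a3 hA3 (hPadj3 x hx) a3 hA3⟩
  -- P's pairwise disjoint
  have hPd12 : Disjoint P1 P2 := by
    rw [Finset.disjoint_left]
    intro x hx1 hx2
    exact hchild_ne hA1 (hPadj1 x hx1) (hPne1 x hx1) hA2 (hPadj2 x hx2) ha12 rfl
  have hPd13 : Disjoint P1 P3 := by
    rw [Finset.disjoint_left]
    intro x hx1 hx2
    exact hchild_ne hA1 (hPadj1 x hx1) (hPne1 x hx1) hA3 (hPadj3 x hx2) ha13 rfl
  have hPd23 : Disjoint P2 P3 := by
    rw [Finset.disjoint_left]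
    intro x hx1 hx2
    exact hchild_ne hA2 (hPadj2 x hx1) (hPne2 x hx1) hA3 (hPadj3 x hx2) ha23 rfl
  -- the first two layers
  set S : Finset V := insert v0 ({a1, a2, a3} ∪ (P1 ∪ P2 ∪ P3)) with hS
  set W : Finset V := Finset.univ \ S with hWdef
  have hBcard : (P1 ∪ P2 ∪ P3).card = 6 := by
    rw [Finset.card_union_of_disjoint (by rw [Finset.disjoint_union_left]; exact ⟨hPd13, hPd23⟩),
      Finset.card_union_of_disjoint hPd12, hP1card, hP2card, hP3card]
  have hScard : S.card = 10 := by
    rw [hS, Finset.card_insert_of_notMem, Finset.card_union_of_disjoint, hBcard]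
    · have : ({a1, a2, a3} : Finset V).card = 3 := by
        rw [Finset.card_insert_of_notMem (by simp [ha12, ha13]),
          Finset.card_insert_of_notMem (by simp [ha23]), Finset.card_singleton]
      omega
    · rw [Finset.disjoint_left]
      intro x hx hx2
      simp only [Finset.mem_insert, Finset.mem_singleton] at hx
      simp only [Finset.mem_union] at hx2
      obtain ⟨n1, n2, n3⟩ := hPnota x (by tauto)
      tauto
    · simp only [Finset.mem_union, Finset.mem_insert, Finset.mem_singleton]
      push_neg
      exact ⟨⟨hA1.ne, hA2.ne, hA3.ne⟩, ⟨hv0P1, hv0P2⟩, hv0P3⟩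
  have hWcard : W.card = 4 := by
    rw [hWdef, Finset.card_sdiff_of_subset (Finset.subset_univ _), Finset.card_univ, hcard, hScard]
  have hmemW : ∀ x : V, x ∈ W ↔ (x ≠ v0 ∧ x ≠ a1 ∧ x ≠ a2 ∧ x ≠ a3 ∧ x ∉ P1 ∧ x ∉ P2 ∧ x ∉ P3) := by
    intro x
    simp only [hWdef, hS, Finset.mem_sdiff, Finset.mem_univ, true_and, Finset.mem_insert,
      Finset.mem_union, Finset.mem_singleton]
    tauto
  have hWS : ∀ {y : V}, y ∈ W → y ∉ S := by
    intro y hy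
    rw [hWdef, Finset.mem_sdiff] at hy
    exact hy.2
  -- neighbours of second-layer vertices
  have hnb : ∀ {a b : V}, G.Adj v0 a → G.Adj a b → b ≠ v0 → G.neighborFinset b ⊆ insert a W := by
    intro a b ha hab hb x hx
    rw [G.mem_neighborFinset _ _] at hx
    by_cases hxa : x = a
    · exact Finset.mem_insert.mpr (Or.inl hxa)
    refine Finset.mem_insert.mpr (Or.inr ((hmemW x).mpr ⟨?_, ?_, ?_, ?_, ?_, ?_, ?_⟩))
    · rintro rfl; exact bprop ha hab hb hx.symm
    · rintro rfl; exact bprop2 ha hab hb hA1 (fun h => hxa h) hx.symm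
    · rintro rfl; exact bprop2 ha hab hb hA2 (fun h => hxa h) hx.symm
    · rintro rfl; exact bprop2 ha hab hb hA3 (fun h => hxa h) hx.symm
    · intro hxP
      by_cases h : a = a1
      · subst h; exact hsame hab (hPadj1 x hxP) hx
      · exact hcross ha hab hb hA1 (hPadj1 x hxP) (hPne1 x hxP) h hx
    · intro hxP
      by_cases h : a = a2
      · subst h; exact hsame hab (hPadj2 x hxP) hx
      · exact hcross ha hab hb hA2 (hPadj2 x hxP) (hPne2 x hxP) h hx
    · intro hxP
      by_cases h : a = a3
      · subst h; exact hsame hab (hPadj3 x hxP) hx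
      · exact hcross ha hab hb hA3 (hPadj3 x hxP) (hPne3 x hxP) h hx
  have hNbW : ∀ {a b : V}, G.Adj v0 a → G.Adj a b → b ≠ v0 →
      (G.neighborFinset b ∩ W).card = 2 := by
    intro a b ha hab hb
    have hsub := hnb ha hab hb
    have haS : a ∈ S := by
      rcases (hAiff a).mp ha with h | h | h <;> simp [hS, h]
    have haW : a ∉ W := fun h => hWS h haS
    have h1 : G.neighborFinset b = insert a (G.neighborFinset b ∩ W) := by
      apply Finset.Subset.antisymm
      · intro x hx
        rcases Finset.mem_insert.mp (hsub hx) with h | h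
        · exact h ▸ Finset.mem_insert_self _ _
        · exact Finset.mem_insert_of_mem (Finset.mem_inter.mpr ⟨hx, h⟩)
      · intro x hx
        rcases Finset.mem_insert.mp hx with rfl | h
        · exact (G.mem_neighborFinset _ _).mpr hab.symm
        · exact (Finset.mem_inter.mp h).1
    have h2 := hdeg b
    rw [h1, Finset.card_insert_of_notMem (fun hmem => haW (Finset.mem_inter.mp hmem).2)] at h2
    omega
  -- double counting
  have hcount : ∀ A B : Finset V, (∑ x ∈ A, (G.neighborFinset x ∩ B).card) =
      ∑ y ∈ B, (G.neighborFinset y ∩ A).card := by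
    intro A B
    have h1 : ∀ (x : V) (C : Finset V), (G.neighborFinset x ∩ C).card =
        ∑ y ∈ C, if G.Adj x y then 1 else 0 := by
      intro x C
      rw [← Finset.card_filter]
      congr 1
      ext y
      simp [Finset.mem_inter, Finset.mem_filter, G.mem_neighborFinset _ _, and_comm]
    simp_rw [h1]
    rw [Finset.sum_comm]
    apply Finset.sum_congr rfl
    intro y _
    apply Finset.sum_congr rfl
    intro x _
    simp [SimpleGraph.adj_comm]
  have hBW : ∀ y ∈ P1 ∪ P2 ∪ P3, (G.neighborFinset y ∩ W).card = 2 := by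
    intro y hy
    simp only [Finset.mem_union] at hy
    rcases hy with (hy | hy) | hy
    · exact hNbW hA1 (hPadj1 y hy) (hPne1 y hy)
    · exact hNbW hA2 (hPadj2 y hy) (hPne2 y hy)
    · exact hNbW hA3 (hPadj3 y hy) (hPne3 y hy)
  have hWsub : ∀ w ∈ W, G.neighborFinset w ⊆ P1 ∪ P2 ∪ P3 := by
    have hsum : ∑ w ∈ W, (G.neighborFinset w ∩ (P1 ∪ P2 ∪ P3)).card = 12 := by
      rw [hcount W (P1 ∪ P2 ∪ P3), Finset.sum_congr rfl hBW, Finset.sum_const, hBcard]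
      norm_num
    have hle : ∀ w ∈ W, (G.neighborFinset w ∩ (P1 ∪ P2 ∪ P3)).card ≤ 3 := fun w _ =>
      le_trans (Finset.card_le_card Finset.inter_subset_left) (le_of_eq (hdeg w))
    have hall : ∀ w ∈ W, (G.neighborFinset w ∩ (P1 ∪ P2 ∪ P3)).card = 3 := by
      by_contra hc
      push_neg at hc
      obtain ⟨w, hw, hne⟩ := hc
      have hlt := Finset.sum_lt_sum hle ⟨w, hw, lt_of_le_of_ne (hle w hw) hne⟩
      rw [hsum, Finset.sum_const, hWcard] at hlt
      norm_num at hlt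
    intro w hw
    have heq : G.neighborFinset w ∩ (P1 ∪ P2 ∪ P3) = G.neighborFinset w :=
      Finset.eq_of_subset_of_card_le Finset.inter_subset_left
        (by rw [hdeg, hall w hw])
    intro x hx
    exact (Finset.mem_inter.mp (heq ▸ hx)).2
  -- each W-vertex has exactly one neighbour in each branch
  have hWnotA : ∀ w ∈ W, ∀ a : V, G.Adj v0 a → w ≠ a := by
    intro w hw a ha he
    subst he
    rcases (hAiff w).mp ha with h | h | h <;>
      [exact ((hmemW w).mp hw).2.1 h; exact ((hmemW w).mp hw).2.2.1 h;
       exact ((hmemW w).mp hw).2.2.2.1 h]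
  have hatmost1 : ∀ w ∈ W, ∀ (a : V) (P : Finset V), G.Adj v0 a → (∀ x ∈ P, G.Adj a x) →
      (G.neighborFinset w ∩ P).card ≤ 1 := by
    intro w hw a P ha hP
    rw [Finset.card_le_one]
    intro x hx y hy
    by_contra hxy
    have hx' := Finset.mem_inter.mp hx
    have hy' := Finset.mem_inter.mp hy
    exact no4 ((G.mem_neighborFinset _ _).mp hx'.1) (hP x hx'.2).symm (hP y hy'.2)
      ((G.mem_neighborFinset _ _).mp hy'.1) (hWnotA w hw a ha) hxy
  have hWbranch : ∀ w ∈ W, (G.neighborFinset w ∩ P1).card = 1 ∧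
      (G.neighborFinset w ∩ P2).card = 1 ∧ (G.neighborFinset w ∩ P3).card = 1 := by
    intro w hw
    have hunion : G.neighborFinset w =
        (G.neighborFinset w ∩ P1 ∪ G.neighborFinset w ∩ P2) ∪ G.neighborFinset w ∩ P3 := by
      rw [← Finset.inter_union_distrib_left, ← Finset.inter_union_distrib_left]
      exact (Finset.inter_eq_left.mpr (hWsub w hw)).symm
    have hcard3 := hdeg w
    rw [hunion, Finset.card_union_of_disjoint, Finset.card_union_of_disjoint] at hcard3
    · have e1 := hatmost1 w hw a1 P1 hA1 hPadj1
      have e2 := hatmost1 w hw a2 P2 hA2 hPadj2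
      have e3 := hatmost1 w hw a3 P3 hA3 hPadj3
      refine ⟨?_, ?_, ?_⟩ <;> omega
    · exact Finset.disjoint_of_subset_left Finset.inter_subset_right
        (Finset.disjoint_of_subset_right Finset.inter_subset_right hPd12)
    · rw [Finset.disjoint_union_left]
      constructor
      · exact Finset.disjoint_of_subset_left Finset.inter_subset_right
          (Finset.disjoint_of_subset_right Finset.inter_subset_right hPd13)
      · exact Finset.disjoint_of_subset_left Finset.inter_subset_right
          (Finset.disjoint_of_subset_right Finset.inter_subset_right hPd23)
  -- pick w0 and orient each branch
  obtain ⟨w0, hw0W⟩ : W.Nonempty := Finset.card_pos.mp (by rw [hWcard]; norm_num)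
  have hpick : ∀ P : Finset V, P.card = 2 → (G.neighborFinset w0 ∩ P).card = 1 →
      ∃ c d : V, P = {c, d} ∧ c ≠ d ∧ G.Adj w0 c ∧ ¬ G.Adj w0 d := by
    intro P hP2 h1
    obtain ⟨c, hc⟩ := Finset.card_eq_one.mp h1
    have hcmem : c ∈ G.neighborFinset w0 ∩ P := hc ▸ Finset.mem_singleton_self c
    have hcP : c ∈ P := (Finset.mem_inter.mp hcmem).2
    have hcAdj : G.Adj w0 c := (G.mem_neighborFinset _ _).mp (Finset.mem_inter.mp hcmem).1
    obtain ⟨x, y, hxy, hPxy⟩ := Finset.card_eq_two.mp hP2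
    have hnotother : ∀ d : V, d ∈ P → d ≠ c → ¬ G.Adj w0 d := by
      intro d hdP hdc hadj
      have : d ∈ G.neighborFinset w0 ∩ P :=
        Finset.mem_inter.mpr ⟨(G.mem_neighborFinset _ _).mpr hadj, hdP⟩
      rw [hc, Finset.mem_singleton] at this
      exact hdc this
    have hcxy : c = x ∨ c = y := by
      rw [hPxy] at hcP
      simpa using hcP
    rcases hcxy with rfl | rfl
    · exact ⟨c, y, hPxy, hxy, hcAdj,
        hnotother y (by rw [hPxy]; simp) (Ne.symm hxy)⟩
    · refine ⟨c, x, by rw [hPxy]; exact Finset.pair_comm x c, Ne.symm hxy, hcAdj,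
        hnotother x (by rw [hPxy]; simp) hxy⟩
  obtain ⟨c1, d1, hP1eq, hcd1, hw0c1, hw0d1⟩ := hpick P1 hP1card (hWbranch w0 hw0W).1
  obtain ⟨c2, d2, hP2eq, hcd2, hw0c2, hw0d2⟩ := hpick P2 hP2card (hWbranch w0 hw0W).2.1
  obtain ⟨c3, d3, hP3eq, hcd3, hw0c3, hw0d3⟩ := hpick P3 hP3card (hWbranch w0 hw0W).2.2
  have hc1P : c1 ∈ P1 := by rw [hP1eq]; simp
  have hd1P : d1 ∈ P1 := by rw [hP1eq]; simp
  have hc2P : c2 ∈ P2 := by rw [hP2eq]; simp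
  have hd2P : d2 ∈ P2 := by rw [hP2eq]; simp
  have hc3P : c3 ∈ P3 := by rw [hP3eq]; simp
  have hd3P : d3 ∈ P3 := by rw [hP3eq]; simp
  -- cross-branch distinctness of children
  have ne12 : ∀ x ∈ P1, ∀ y ∈ P2, x ≠ y := by
    intro x hx y hy he
    exact (Finset.disjoint_left.mp hPd12 hx) (he ▸ hy)
  have ne13 : ∀ x ∈ P1, ∀ y ∈ P3, x ≠ y := by
    intro x hx y hy he
    exact (Finset.disjoint_left.mp hPd13 hx) (he ▸ hy)
  have ne23 : ∀ x ∈ P2, ∀ y ∈ P3, x ≠ y := by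
    intro x hx y hy he
    exact (Finset.disjoint_left.mp hPd23 hx) (he ▸ hy)
  -- the other three W-vertices
  have hother : ∀ b : V, (G.neighborFinset b ∩ W).card = 2 → G.Adj w0 b →
      ∃ z, z ≠ w0 ∧ z ∈ W ∧ G.Adj b z ∧ G.neighborFinset b ∩ W = {w0, z} := by
    intro b h2 hadj
    have hw0mem : w0 ∈ G.neighborFinset b ∩ W :=
      Finset.mem_inter.mpr ⟨(G.mem_neighborFinset _ _).mpr hadj.symm, hw0W⟩
    obtain ⟨x, y, hxy, hxyeq⟩ := Finset.card_eq_two.mp h2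
    have hw0xy : w0 = x ∨ w0 = y := by rw [hxyeq] at hw0mem; simpa using hw0mem
    rcases hw0xy with rfl | rfl
    · have hymem : y ∈ G.neighborFinset b ∩ W := by rw [hxyeq]; simp
      exact ⟨y, Ne.symm hxy, (Finset.mem_inter.mp hymem).2,
        (G.mem_neighborFinset _ _).mp (Finset.mem_inter.mp hymem).1, hxyeq⟩
    · have hxmem : x ∈ G.neighborFinset b ∩ W := by rw [hxyeq]; simp
      exact ⟨x, hxy, (Finset.mem_inter.mp hxmem).2,
        (G.mem_neighborFinset _ _).mp (Finset.mem_inter.mp hxmem).1,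
        by rw [hxyeq]; exact Finset.pair_comm x w0⟩
  obtain ⟨w1, hw10, hw1W, hc1w1, hNc1W⟩ :=
    hother c1 (hNbW hA1 (hPadj1 c1 hc1P) (hPne1 c1 hc1P)) hw0c1
  obtain ⟨w2, hw20, hw2W, hc2w2, hNc2W⟩ :=
    hother c2 (hNbW hA2 (hPadj2 c2 hc2P) (hPne2 c2 hc2P)) hw0c2
  obtain ⟨w3, hw30, hw3W, hc3w3, hNc3W⟩ :=
    hother c3 (hNbW hA3 (hPadj3 c3 hc3P) (hPne3 c3 hc3P)) hw0c3
  -- w_k is not adjacent to the other c's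
  have hwnotc : ∀ {wk ck cj : V}, G.Adj ck wk → G.Adj w0 ck → G.Adj w0 cj → wk ≠ w0 →
      cj ≠ ck → ¬ G.Adj wk cj := by
    intro wk ck cj hckwk hw0ck hw0cj hwk0 hne hadj
    exact no4 hw0cj hadj.symm hckwk.symm hw0ck (Ne.symm hwk0) hne
  -- exactly-one-per-branch helpers
  have honeP : ∀ (w : V) (P : Finset V) (c d : V), (G.neighborFinset w ∩ P).card = 1 →
      P = {c, d} → ¬ G.Adj w c → G.Adj w d := by
    intro w P c d h1 hPeq hnc
    obtain ⟨z, hz⟩ := Finset.card_eq_one.mp h1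
    have hzmem : z ∈ G.neighborFinset w ∩ P := hz ▸ Finset.mem_singleton_self z
    have hzP : z ∈ P := (Finset.mem_inter.mp hzmem).2
    have hzadj : G.Adj w z := (G.mem_neighborFinset _ _).mp (Finset.mem_inter.mp hzmem).1
    rw [hPeq] at hzP
    rcases Finset.mem_insert.mp hzP with rfl | hz2
    · exact absurd hzadj hnc
    · rw [Finset.mem_singleton] at hz2
      exact hz2 ▸ hzadj
  have hnotd : ∀ (w : V) (P : Finset V) (c d : V), (G.neighborFinset w ∩ P).card = 1 →
      P = {c, d} → c ≠ d → G.Adj w c → ¬ G.Adj w d := by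
    intro w P c d h1 hPeq hcd hc hd
    have hcm : c ∈ G.neighborFinset w ∩ P :=
      Finset.mem_inter.mpr ⟨(G.mem_neighborFinset _ _).mpr hc, by rw [hPeq]; simp⟩
    have hdm : d ∈ G.neighborFinset w ∩ P :=
      Finset.mem_inter.mpr ⟨(G.mem_neighborFinset _ _).mpr hd, by rw [hPeq]; simp⟩
    exact hcd (Finset.card_le_one.mp (le_of_eq h1) _ hcm _ hdm)
  -- adjacency pattern of w1, w2, w3
  have hw1c2 : ¬ G.Adj w1 c2 := hwnotc hc1w1 hw0c1 hw0c2 hw10 (Ne.symm (ne12 c1 hc1P c2 hc2P))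
  have hw1c3 : ¬ G.Adj w1 c3 := hwnotc hc1w1 hw0c1 hw0c3 hw10 (Ne.symm (ne13 c1 hc1P c3 hc3P))
  have hw2c1 : ¬ G.Adj w2 c1 := hwnotc hc2w2 hw0c2 hw0c1 hw20 (ne12 c1 hc1P c2 hc2P)
  have hw2c3 : ¬ G.Adj w2 c3 := hwnotc hc2w2 hw0c2 hw0c3 hw20 (Ne.symm (ne23 c2 hc2P c3 hc3P))
  have hw3c1 : ¬ G.Adj w3 c1 := hwnotc hc3w3 hw0c3 hw0c1 hw30 (ne13 c1 hc1P c3 hc3P)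
  have hw3c2 : ¬ G.Adj w3 c2 := hwnotc hc3w3 hw0c3 hw0c2 hw30 (ne23 c2 hc2P c3 hc3P)
  have hw1d2 : G.Adj w1 d2 := honeP w1 P2 c2 d2 (hWbranch w1 hw1W).2.1 hP2eq hw1c2
  have hw1d3 : G.Adj w1 d3 := honeP w1 P3 c3 d3 (hWbranch w1 hw1W).2.2 hP3eq hw1c3
  have hw2d1 : G.Adj w2 d1 := honeP w2 P1 c1 d1 (hWbranch w2 hw2W).1 hP1eq hw2c1
  have hw2d3 : G.Adj w2 d3 := honeP w2 P3 c3 d3 (hWbranch w2 hw2W).2.2 hP3eq hw2c3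
  have hw3d1 : G.Adj w3 d1 := honeP w3 P1 c1 d1 (hWbranch w3 hw3W).1 hP1eq hw3c1
  have hw3d2 : G.Adj w3 d2 := honeP w3 P2 c2 d2 (hWbranch w3 hw3W).2.1 hP2eq hw3c2
  -- the three new vertices are distinct
  have hw12 : w1 ≠ w2 := by intro he; exact hw1c2 (by rw [he]; exact hc2w2.symm)
  have hw13 : w1 ≠ w3 := by intro he; exact hw1c3 (by rw [he]; exact hc3w3.symm)
  have hw23 : w2 ≠ w3 := by intro he; exact hw2c3 (by rw [he]; exact hc3w3.symm)
  -- memberships in S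
  have hv0S : v0 ∈ S := by simp [hS]
  have ha1S : a1 ∈ S := by simp [hS]
  have ha2S : a2 ∈ S := by simp [hS]
  have ha3S : a3 ∈ S := by simp [hS]
  have hc1S : c1 ∈ S := by simp [hS, hc1P]
  have hd1S : d1 ∈ S := by simp [hS, hd1P]
  have hc2S : c2 ∈ S := by simp [hS, hc2P]
  have hd2S : d2 ∈ S := by simp [hS, hd2P]
  have hc3S : c3 ∈ S := by simp [hS, hc3P]
  have hd3S : d3 ∈ S := by simp [hS, hd3P]
  have hSWne : ∀ {x y : V}, x ∈ S → y ∈ W → x ≠ y := by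
    intro x y hx hy he
    exact hWS hy (he ▸ hx)
  -- complete neighbourhood descriptions
  have nbr_eq : ∀ v x y z : V, G.Adj v x → G.Adj v y → G.Adj v z → x ≠ y → x ≠ z → y ≠ z →
      G.neighborFinset v = {x, y, z} := by
    intro v x y z h1 h2 h3 n1 n2 n3
    symm
    apply Finset.eq_of_subset_of_card_le
    · intro t ht
      simp only [Finset.mem_insert, Finset.mem_singleton] at ht
      rcases ht with rfl | rfl | rfl <;> rw [G.mem_neighborFinset _ _] <;> assumption
    · rw [hdeg]
      rw [Finset.card_insert_of_notMem (by simp [n1, n2]),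
        Finset.card_insert_of_notMem (by simp [n3]), Finset.card_singleton]
  have hNa1' : G.neighborFinset a1 = {v0, c1, d1} := by rw [hNa1, hP1eq]
  have hNa2' : G.neighborFinset a2 = {v0, c2, d2} := by rw [hNa2, hP2eq]
  have hNa3' : G.neighborFinset a3 = {v0, c3, d3} := by rw [hNa3, hP3eq]
  have hNc1 : G.neighborFinset c1 = {a1, w0, w1} :=
    nbr_eq c1 a1 w0 w1 (hPadj1 c1 hc1P).symm hw0c1.symm hc1w1
      (hSWne ha1S hw0W) (hSWne ha1S hw1W) (Ne.symm hw10)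
  have hNd1 : G.neighborFinset d1 = {a1, w2, w3} :=
    nbr_eq d1 a1 w2 w3 (hPadj1 d1 hd1P).symm hw2d1.symm hw3d1.symm
      (hSWne ha1S hw2W) (hSWne ha1S hw3W) hw23
  have hNc2 : G.neighborFinset c2 = {a2, w0, w2} :=
    nbr_eq c2 a2 w0 w2 (hPadj2 c2 hc2P).symm hw0c2.symm hc2w2
      (hSWne ha2S hw0W) (hSWne ha2S hw2W) (Ne.symm hw20)
  have hNd2 : G.neighborFinset d2 = {a2, w1, w3} :=
    nbr_eq d2 a2 w1 w3 (hPadj2 d2 hd2P).symm hw1d2.symm hw3d2.symm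
      (hSWne ha2S hw1W) (hSWne ha2S hw3W) hw13
  have hNc3 : G.neighborFinset c3 = {a3, w0, w3} :=
    nbr_eq c3 a3 w0 w3 (hPadj3 c3 hc3P).symm hw0c3.symm hc3w3
      (hSWne ha3S hw0W) (hSWne ha3S hw3W) (Ne.symm hw30)
  have hNd3 : G.neighborFinset d3 = {a3, w1, w2} :=
    nbr_eq d3 a3 w1 w2 (hPadj3 d3 hd3P).symm hw1d3.symm hw2d3.symm
      (hSWne ha3S hw1W) (hSWne ha3S hw2W) hw12
  have hNw0 : G.neighborFinset w0 = {c1, c2, c3} :=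
    nbr_eq w0 c1 c2 c3 hw0c1 hw0c2 hw0c3
      (ne12 c1 hc1P c2 hc2P) (ne13 c1 hc1P c3 hc3P) (ne23 c2 hc2P c3 hc3P)
  have hNw1 : G.neighborFinset w1 = {c1, d2, d3} :=
    nbr_eq w1 c1 d2 d3 hc1w1.symm hw1d2 hw1d3
      (ne12 c1 hc1P d2 hd2P) (ne13 c1 hc1P d3 hd3P) (ne23 d2 hd2P d3 hd3P)
  have hNw2 : G.neighborFinset w2 = {c2, d1, d3} :=
    nbr_eq w2 c2 d1 d3 hc2w2.symm hw2d1 hw2d3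
      (Ne.symm (ne12 d1 hd1P c2 hc2P)) (ne23 c2 hc2P d3 hd3P) (ne13 d1 hd1P d3 hd3P)
  have hNw3 : G.neighborFinset w3 = {c3, d1, d2} :=
    nbr_eq w3 c3 d1 d2 hc3w3.symm hw3d1 hw3d2
      (Ne.symm (ne13 d1 hd1P c3 hc3P)) (Ne.symm (ne23 d2 hd2P c3 hc3P))
      (ne12 d1 hd1P d2 hd2P)
  -- the vertex enumeration
  have hnd : ([v0, a1, a2, a3, c1, d1, c2, d2, c3, d3, w0, w1, w2, w3] : List V).Nodup := by
    simp only [List.nodup_cons, List.mem_cons, List.not_mem_nil, or_false, not_or,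
      List.nodup_nil, and_true]
    exact ⟨⟨hA1.ne, hA2.ne, hA3.ne, Ne.symm (hPne1 c1 hc1P), Ne.symm (hPne1 d1 hd1P), Ne.symm (hPne2 c2 hc2P), Ne.symm (hPne2 d2 hd2P), Ne.symm (hPne3 c3 hc3P), Ne.symm (hPne3 d3 hd3P), hSWne hv0S hw0W, hSWne hv0S hw1W, hSWne hv0S hw2W, hSWne hv0S hw3W⟩,
      ⟨ha12, ha13, Ne.symm (hPnota c1 (Or.inl hc1P)).1, Ne.symm (hPnota d1 (Or.inl hd1P)).1, Ne.symm (hPnota c2 (Or.inr (Or.inl hc2P))).1, Ne.symm (hPnota d2 (Or.inr (Or.inl hd2P))).1, Ne.symm (hPnota c3 (Or.inr (Or.inr hc3P))).1, Ne.symm (hPnota d3 (Or.inr (Or.inr hd3P))).1, hSWne ha1S hw0W, hSWne ha1S hw1W, hSWne ha1S hw2W, hSWne ha1S hw3W⟩,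
      ⟨ha23, Ne.symm (hPnota c1 (Or.inl hc1P)).2.1, Ne.symm (hPnota d1 (Or.inl hd1P)).2.1, Ne.symm (hPnota c2 (Or.inr (Or.inl hc2P))).2.1, Ne.symm (hPnota d2 (Or.inr (Or.inl hd2P))).2.1, Ne.symm (hPnota c3 (Or.inr (Or.inr hc3P))).2.1, Ne.symm (hPnota d3 (Or.inr (Or.inr hd3P))).2.1, hSWne ha2S hw0W, hSWne ha2S hw1W, hSWne ha2S hw2W, hSWne ha2S hw3W⟩,
      ⟨Ne.symm (hPnota c1 (Or.inl hc1P)).2.2, Ne.symm (hPnota d1 (Or.inl hd1P)).2.2, Ne.symm (hPnota c2 (Or.inr (Or.inl hc2P))).2.2, Ne.symm (hPnota d2 (Or.inr (Or.inl hd2P))).2.2, Ne.symm (hPnota c3 (Or.inr (Or.inr hc3P))).2.2, Ne.symm (hPnota d3 (Or.inr (Or.inr hd3P))).2.2, hSWne ha3S hw0W, hSWne ha3S hw1W, hSWne ha3S hw2W, hSWne ha3S hw3W⟩,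
      ⟨hcd1, ne12 c1 hc1P c2 hc2P, ne12 c1 hc1P d2 hd2P, ne13 c1 hc1P c3 hc3P, ne13 c1 hc1P d3 hd3P, hSWne hc1S hw0W, hSWne hc1S hw1W, hSWne hc1S hw2W, hSWne hc1S hw3W⟩,
      ⟨ne12 d1 hd1P c2 hc2P, ne12 d1 hd1P d2 hd2P, ne13 d1 hd1P c3 hc3P, ne13 d1 hd1P d3 hd3P, hSWne hd1S hw0W, hSWne hd1S hw1W, hSWne hd1S hw2W, hSWne hd1S hw3W⟩,
      ⟨hcd2, ne23 c2 hc2P c3 hc3P, ne23 c2 hc2P d3 hd3P, hSWne hc2S hw0W, hSWne hc2S hw1W, hSWne hc2S hw2W, hSWne hc2S hw3W⟩,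
      ⟨ne23 d2 hd2P c3 hc3P, ne23 d2 hd2P d3 hd3P, hSWne hd2S hw0W, hSWne hd2S hw1W, hSWne hd2S hw2W, hSWne hd2S hw3W⟩,
      ⟨hcd3, hSWne hc3S hw0W, hSWne hc3S hw1W, hSWne hc3S hw2W, hSWne hc3S hw3W⟩,
      ⟨hSWne hd3S hw0W, hSWne hd3S hw1W, hSWne hd3S hw2W, hSWne hd3S hw3W⟩,
      ⟨Ne.symm hw10, Ne.symm hw20, Ne.symm hw30⟩,
      ⟨hw12, hw13⟩,
      ⟨hw23, not_false⟩⟩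
  have hg14 : ([v0, a1, a2, a3, c1, d1, c2, d2, c3, d3, w0, w1, w2, w3] : List V).length = 14 :=
    rfl
  set g : Fin 14 → V := fun i =>
    ([v0, a1, a2, a3, c1, d1, c2, d2, c3, d3, w0, w1, w2, w3] : List V).get
      (Fin.cast hg14.symm i) with hgdef
  have hginj : Function.Injective g := by
    intro i j hij
    have h := List.nodup_iff_injective_get.mp hnd hij
    exact Fin.ext (congrArg Fin.val h)
  have himg : ∀ i : Fin 14, G.neighborFinset (g i) = (ModelGraph.neighborFinset i).image g := by
    intro i
    fin_cases i
    · show G.neighborFinset (g 0) = (ModelGraph.neighborFinset 0).image g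
      rw [show ModelGraph.neighborFinset 0 = ({1, 2, 3} : Finset (Fin 14)) from by decide,
        Finset.image_insert, Finset.image_insert, Finset.image_singleton]
      exact hNv0
    · show G.neighborFinset (g 1) = (ModelGraph.neighborFinset 1).image g
      rw [show ModelGraph.neighborFinset 1 = ({0, 4, 5} : Finset (Fin 14)) from by decide,
        Finset.image_insert, Finset.image_insert, Finset.image_singleton]
      exact hNa1'
    · show G.neighborFinset (g 2) = (ModelGraph.neighborFinset 2).image g
      rw [show ModelGraph.neighborFinset 2 = ({0, 6, 7} : Finset (Fin 14)) from by decide,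
        Finset.image_insert, Finset.image_insert, Finset.image_singleton]
      exact hNa2'
    · show G.neighborFinset (g 3) = (ModelGraph.neighborFinset 3).image g
      rw [show ModelGraph.neighborFinset 3 = ({0, 8, 9} : Finset (Fin 14)) from by decide,
        Finset.image_insert, Finset.image_insert, Finset.image_singleton]
      exact hNa3'
    · show G.neighborFinset (g 4) = (ModelGraph.neighborFinset 4).image g
      rw [show ModelGraph.neighborFinset 4 = ({1, 10, 11} : Finset (Fin 14)) from by decide,
        Finset.image_insert, Finset.image_insert, Finset.image_singleton]
      exact hNc1
    · show G.neighborFinset (g 5) = (ModelGraph.neighborFinset 5).image g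
      rw [show ModelGraph.neighborFinset 5 = ({1, 12, 13} : Finset (Fin 14)) from by decide,
        Finset.image_insert, Finset.image_insert, Finset.image_singleton]
      exact hNd1
    · show G.neighborFinset (g 6) = (ModelGraph.neighborFinset 6).image g
      rw [show ModelGraph.neighborFinset 6 = ({2, 10, 12} : Finset (Fin 14)) from by decide,
        Finset.image_insert, Finset.image_insert, Finset.image_singleton]
      exact hNc2
    · show G.neighborFinset (g 7) = (ModelGraph.neighborFinset 7).image g
      rw [show ModelGraph.neighborFinset 7 = ({2, 11, 13} : Finset (Fin 14)) from by decide,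
        Finset.image_insert, Finset.image_insert, Finset.image_singleton]
      exact hNd2
    · show G.neighborFinset (g 8) = (ModelGraph.neighborFinset 8).image g
      rw [show ModelGraph.neighborFinset 8 = ({3, 10, 13} : Finset (Fin 14)) from by decide,
        Finset.image_insert, Finset.image_insert, Finset.image_singleton]
      exact hNc3
    · show G.neighborFinset (g 9) = (ModelGraph.neighborFinset 9).image g
      rw [show ModelGraph.neighborFinset 9 = ({3, 11, 12} : Finset (Fin 14)) from by decide,
        Finset.image_insert, Finset.image_insert, Finset.image_singleton]
      exact hNd3
    · show G.neighborFinset (g 10) = (ModelGraph.neighborFinset 10).image g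
      rw [show ModelGraph.neighborFinset 10 = ({4, 6, 8} : Finset (Fin 14)) from by decide,
        Finset.image_insert, Finset.image_insert, Finset.image_singleton]
      exact hNw0
    · show G.neighborFinset (g 11) = (ModelGraph.neighborFinset 11).image g
      rw [show ModelGraph.neighborFinset 11 = ({4, 7, 9} : Finset (Fin 14)) from by decide,
        Finset.image_insert, Finset.image_insert, Finset.image_singleton]
      exact hNw1
    · show G.neighborFinset (g 12) = (ModelGraph.neighborFinset 12).image g
      rw [show ModelGraph.neighborFinset 12 = ({6, 5, 9} : Finset (Fin 14)) from by decide,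
        Finset.image_insert, Finset.image_insert, Finset.image_singleton]
      exact hNw2
    · show G.neighborFinset (g 13) = (ModelGraph.neighborFinset 13).image g
      rw [show ModelGraph.neighborFinset 13 = ({8, 5, 7} : Finset (Fin 14)) from by decide,
        Finset.image_insert, Finset.image_insert, Finset.image_singleton]
      exact hNw3
  have hiff : ∀ i j : Fin 14, ModelGraph.Adj i j ↔ G.Adj (g i) (g j) := by
    intro i j
    rw [← SimpleGraph.mem_neighborFinset, ← SimpleGraph.mem_neighborFinset, himg i,
      Function.Injective.mem_finset_image hginj]
  have hbij : Function.Bijective g :=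
    (Fintype.bijective_iff_injective_and_card g).mpr ⟨hginj, by simp [hcard]⟩
  obtain ⟨φ⟩ := model_iso_heawood
  refine ⟨RelIso.trans (⟨(Equiv.ofBijective g hbij).symm, ?_⟩ : G ≃g ModelGraph) φ⟩
  intro u v
  rw [hiff,
    show g ((Equiv.ofBijective g hbij).symm u) = u from Equiv.ofBijective_apply_symm_apply g hbij u,
    show g ((Equiv.ofBijective g hbij).symm v) = v from Equiv.ofBijective_apply_symm_apply g hbij v]
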